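/- arXiv:2107.00118 — 6 statements merged into one kernel-verified Lean document; each statement's English description precedes it below -/
import Mathlib

section
/- Let y₁ ≠ y₂ be real numbers and τ > 0, μ ∈ ℝ. Define H_i = (τ² + (y_i−μ)²)^{−3/2}·[[τ², τ(y_i−μ)],[τ(y_i−μ), (y_i−μ)²]] for i = 1,2. Then det(H₁ + H₂) = τ²(y₁−y₂)² / ((τ²+(y₁−μ)²)^{3/2}(τ²+(y₂−μ)²)^{3/2}) > 0; in particular H₁ + H₂ is positive definite. -/
/-!
Each `H y` is the positive multiple `c y • v vᵀ` of a rank-one positive semidefinite matrix, with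
`v = (τ, y - μ)`. For two such terms, `det (c₁ • v vᵀ + c₂ • w wᵀ) = c₁ c₂ det[v w]²`, which here is
`c₁ c₂ τ² (y₁ - y₂)² > 0`. A positive semidefinite matrix with nonzero determinant is positive
definite.
-/

open Matrix

theorem Matrix.vecMulVec_fin_two_self {R : Type*} [CommSemiring R] (a b : R) :
    vecMulVec ![a, b] ![a, b] = !![a ^ 2, a * b; a * b, b ^ 2] := by
  ext i j
  fin_cases i <;> fin_cases j <;> simp [vecMulVec_apply, sq, mul_comm]

theorem Matrix.det_fin_two_smul_vecMulVec_self_add_smul_vecMulVec_self {R : Type*} [CommRing R]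
    (a b : R) (v w : Fin 2 → R) :
    (a • vecMulVec v v + b • vecMulVec w w).det = a * b * (v 0 * w 1 - v 1 * w 0) ^ 2 := by
  simp only [det_fin_two, add_apply, smul_apply, vecMulVec_apply, smul_eq_mul]
  ring

theorem sum_hessians_posDef (y₁ y₂ τ μ : ℝ) (hy : y₁ ≠ y₂) (hτ : 0 < τ) :
    let H : ℝ → Matrix (Fin 2) (Fin 2) ℝ := fun y =>
      (τ ^ 2 + (y - μ) ^ 2) ^ (-(3 : ℝ) / 2) •
        !![τ ^ 2, τ * (y - μ); τ * (y - μ), (y - μ) ^ 2]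
    (H y₁ + H y₂).det =
        τ ^ 2 * (y₁ - y₂) ^ 2 /
          ((τ ^ 2 + (y₁ - μ) ^ 2) ^ ((3 : ℝ) / 2) *
            (τ ^ 2 + (y₂ - μ) ^ 2) ^ ((3 : ℝ) / 2)) ∧
      0 < (H y₁ + H y₂).det ∧ (H y₁ + H y₂).PosDef := by
  intro H
  set c : ℝ → ℝ := fun y => (τ ^ 2 + (y - μ) ^ 2) ^ (-(3 : ℝ) / 2)
  have hc_pos : ∀ y, 0 < c y := fun y => Real.rpow_pos_of_pos (by positivity) _
  have hc_inv : ∀ y, c y = ((τ ^ 2 + (y - μ) ^ 2) ^ ((3 : ℝ) / 2))⁻¹ := fun y => by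
    simp only [c, neg_div, Real.rpow_neg (by positivity : (0 : ℝ) ≤ τ ^ 2 + (y - μ) ^ 2)]
  have hH : ∀ y, H y = c y • vecMulVec ![τ, y - μ] ![τ, y - μ] := fun y => by
    rw [vecMulVec_fin_two_self]
  have hdet : (H y₁ + H y₂).det = c y₁ * c y₂ * (τ ^ 2 * (y₁ - y₂) ^ 2) := by
    rw [hH, hH, det_fin_two_smul_vecMulVec_self_add_smul_vecMulVec_self]
    simp only [cons_val_zero, cons_val_one]
    ring
  have hdet_pos : 0 < (H y₁ + H y₂).det := by
    have := sub_ne_zero.mpr hy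
    have := hc_pos y₁
    have := hc_pos y₂
    rw [hdet]
    positivity
  have hpsd : (H y₁ + H y₂).PosSemidef := by
    rw [hH, hH]
    exact ((posSemidef_vecMulVec_self_star _).smul (hc_pos y₁).le).add
      ((posSemidef_vecMulVec_self_star _).smul (hc_pos y₂).le)
  refine ⟨?_, hdet_pos, hpsd.posDef_iff_det_ne_zero.mpr hdet_pos.ne'⟩
  rw [hdet, hc_inv, hc_inv]
  ring
end

section
/- Let ε be a real-valued random variable with E[ε] = 0 and E[ε²] = 1, let σ > 0, and let τ* > 0 satisfy E[τ*/√(τ*² + σ²ε²)] = 1 − z²/n for constants 0 < z² < n. Then τ*² ≤ nσ²/(2z²). -/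
/-!
The function `t ↦ 1 / √(1 + t)` is convex, so it lies above its tangent line `1 - t / 2` at `0`;
with `t = σ²ε² / τ*²` this gives `τ* / √(τ*² + σ²ε²) ≥ 1 - σ²ε² / (2τ*²)` pointwise. Taking expectations
and using `E[ε²] = 1` yields `1 - z² / n ≥ 1 - σ² / (2τ*²)`, which rearranges to the bound.
-/

open MeasureTheory

theorem one_sub_div_two_sq_le_div_sqrt {a s : ℝ} (ha : 0 < a) (hs : -a ^ 2 < s) :
    1 - s / (2 * a ^ 2) ≤ a / √(a ^ 2 + s) := by
  have hr : 0 < √(a ^ 2 + s) := Real.sqrt_pos.mpr (by linarith)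
  have hr2 : √(a ^ 2 + s) ^ 2 = a ^ 2 + s := Real.sq_sqrt (by linarith)
  rw [le_div_iff₀ hr, one_sub_div (by positivity), div_mul_eq_mul_div, div_le_iff₀ (by positivity)]
  rcases le_or_gt (2 * a ^ 2 - s) 0 with hneg | hpos
  · nlinarith [mul_nonpos_of_nonpos_of_nonneg hneg hr.le]
  · refine le_of_pow_le_pow_left₀ two_ne_zero (by positivity) ?_
    -- `(2a² - s)²(a² + s) = 4a⁶ - s²(3a² - s)`
    have : 0 ≤ s ^ 2 * (3 * a ^ 2 - s) := mul_nonneg (sq_nonneg s) (by linarith)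
    calc ((2 * a ^ 2 - s) * √(a ^ 2 + s)) ^ 2 = (2 * a ^ 2 - s) ^ 2 * (a ^ 2 + s) := by
          rw [mul_pow, hr2]
      _ ≤ (a * (2 * a ^ 2)) ^ 2 := by nlinarith

theorem one_sub_integral_div_two_sq_le_integral_div_sqrt {Ω : Type*} [MeasurableSpace Ω]
    {μ : Measure Ω} [IsProbabilityMeasure μ] {X : Ω → ℝ} (hX : Integrable X μ)
    (hX0 : ∀ᵐ ω ∂μ, 0 ≤ X ω) {a : ℝ} (ha : 0 < a) :
    1 - (∫ ω, X ω ∂μ) / (2 * a ^ 2) ≤ ∫ ω, a / √(a ^ 2 + X ω) ∂μ := by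
  have hbounded : ∀ᵐ ω ∂μ, ‖a / √(a ^ 2 + X ω)‖ ≤ 1 := by
    filter_upwards [hX0] with ω hω
    have hle : a ≤ √(a ^ 2 + X ω) := Real.le_sqrt_of_sq_le (by linarith)
    rw [Real.norm_of_nonneg (by positivity)]
    exact div_le_one_of_le₀ hle (Real.sqrt_nonneg _)
  have hint : Integrable (fun ω => a / √(a ^ 2 + X ω)) μ :=
    (integrable_const 1).mono'
      ((hX.aemeasurable.const_add _).sqrt.const_div a).aestronglyMeasurable hbounded
  calc 1 - (∫ ω, X ω ∂μ) / (2 * a ^ 2) = ∫ ω, (1 - X ω / (2 * a ^ 2)) ∂μ := by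
        rw [integral_sub (integrable_const 1) (hX.div_const _), integral_div]
        simp
    _ ≤ ∫ ω, a / √(a ^ 2 + X ω) ∂μ := by
        refine integral_mono_ae ((integrable_const 1).sub (hX.div_const _)) hint ?_
        filter_upwards [hX0] with ω hω
        exact one_sub_div_two_sq_le_div_sqrt ha (by linarith [pow_pos ha 2])

theorem oracle_tau_upper_bound_general {Ω : Type*} [MeasurableSpace Ω]
    (μ : Measure Ω) [IsProbabilityMeasure μ] (ε : Ω → ℝ)
    (hint2 : Integrable (fun ω => (ε ω) ^ 2) μ) (hvar : ∫ ω, (ε ω) ^ 2 ∂μ = 1)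
    (σ τs z n : ℝ) (hτ : 0 < τs) (hz : 0 < z ^ 2) (hzn : z ^ 2 < n)
    (horacle : ∫ ω, τs / Real.sqrt (τs ^ 2 + σ ^ 2 * (ε ω) ^ 2) ∂μ = 1 - z ^ 2 / n) :
    τs ^ 2 ≤ n * σ ^ 2 / (2 * z ^ 2) := by
  have hn : 0 < n := hz.trans hzn
  have hsecond : ∫ ω, σ ^ 2 * (ε ω) ^ 2 ∂μ = σ ^ 2 := by rw [integral_const_mul, hvar, mul_one]
  have hjensen := one_sub_integral_div_two_sq_le_integral_div_sqrt (hint2.const_mul (σ ^ 2))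
    (ae_of_all _ fun ω => by positivity) hτ
  rw [hsecond, horacle, sub_le_sub_iff_left, div_le_div_iff₀ hn (by positivity)] at hjensen
  rw [le_div_iff₀ (by positivity)]
  linarith

theorem oracle_tau_upper_bound {Ω : Type*} [MeasurableSpace Ω]
    (μ : Measure Ω) [IsProbabilityMeasure μ] (ε : Ω → ℝ) (hε : Measurable ε)
    (hint : Integrable ε μ) (hmean : ∫ ω, ε ω ∂μ = 0)
    (hint2 : Integrable (fun ω => (ε ω) ^ 2) μ) (hvar : ∫ ω, (ε ω) ^ 2 ∂μ = 1)
    (σ τs z n : ℝ) (hσ : 0 < σ) (hτ : 0 < τs) (hz : 0 < z ^ 2) (hzn : z ^ 2 < n)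
    (horacle : ∫ ω, τs / Real.sqrt (τs ^ 2 + σ ^ 2 * (ε ω) ^ 2) ∂μ = 1 - z ^ 2 / n) :
    τs ^ 2 ≤ n * σ ^ 2 / (2 * z ^ 2) :=
  oracle_tau_upper_bound_general μ ε hint2 hvar σ τs z n hτ hz hzn horacle
end

section
/- Let ε be a real-valued random variable with E[ε] = 0 and E[ε²] = 1, let σ > 0, and let τ* > 0 satisfy E[τ*/√(τ*² + σ²ε²)] = 1 − z²/n with 0 < z² < n. Define σ²_{τ*} = E[σ²ε²·1{σ²ε² ≤ τ*²}]. Then τ*² ≥ n·σ²_{τ*}/(4z²). -/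
open MeasureTheory

/-
Pointwise, for 0 ≤ y ≤ τ² the inequality (1 + t)^(-1/2) ≤ 1 - t/4 on t = y/τ² ∈ [0, 1] gives
y ≤ 4τ² (1 - τ/√(τ² + y)), while for y > τ² the truncated variable vanishes and the right-hand side
is still nonnegative. Integrating against y = σ²ε² and inserting the oracle equation
E[τ/√(τ² + σ²ε²)] = 1 - z²/n yields σ²_τ ≤ 4τ² z²/n.
-/

lemma div_sqrt_sq_add_le_one {τ y : ℝ} (hy : 0 ≤ y) :
    τ / Real.sqrt (τ ^ 2 + y) ≤ 1 :=
  div_le_one_of_le₀ (Real.le_sqrt_of_sq_le (by linarith)) (Real.sqrt_nonneg _)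

lemma div_sqrt_sq_add_le_one_sub {τ y : ℝ} (hτ : 0 < τ) (hy : 0 ≤ y) (hyτ : y ≤ τ ^ 2) :
    τ / Real.sqrt (τ ^ 2 + y) ≤ 1 - y / (4 * τ ^ 2) := by
  set s := Real.sqrt (τ ^ 2 + y)
  have hs_sq : s ^ 2 = τ ^ 2 + y := Real.sq_sqrt (by positivity)
  have hs_pos : 0 < s := Real.sqrt_pos.mpr (by positivity)
  -- squared, this is `y (8τ⁴ - 7τ²y + y²) ≥ 0`, and `8τ⁴ - 7τ²y + y² = (τ² - y)(8τ² - y) + 2τ²y`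
  have hsquared : (4 * τ ^ 3) ^ 2 ≤ ((4 * τ ^ 2 - y) * s) ^ 2 := by
    rw [mul_pow (4 * τ ^ 2 - y), hs_sq]
    nlinarith [mul_nonneg hy (mul_nonneg (sub_nonneg.mpr hyτ) (by linarith : 0 ≤ 8 * τ ^ 2 - y)),
      mul_nonneg hy (mul_nonneg (sq_nonneg τ) hy)]
  have hcross : 4 * τ ^ 3 ≤ (4 * τ ^ 2 - y) * s :=
    le_of_pow_le_pow_left₀ two_ne_zero (mul_nonneg (by linarith) hs_pos.le) hsquared
  rw [div_le_iff₀ hs_pos, one_sub_div (by positivity), div_mul_eq_mul_div, le_div_iff₀ (by positivity)]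
  linarith

lemma truncate_le_four_mul_sq_mul_one_sub {τ y : ℝ} (hτ : 0 < τ) (hy : 0 ≤ y) :
    (if y ≤ τ ^ 2 then y else 0) ≤ 4 * τ ^ 2 * (1 - τ / Real.sqrt (τ ^ 2 + y)) := by
  split_ifs with hyτ
  · have := div_sqrt_sq_add_le_one_sub hτ hy hyτ
    rw [le_sub_comm, div_le_iff₀ (by positivity)] at this
    linarith
  · exact mul_nonneg (by positivity) (sub_nonneg.mpr (div_sqrt_sq_add_le_one hy))

theorem oracle_tau_lower_bound_general {Ω : Type*} [MeasurableSpace Ω]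
    (μ : Measure Ω) [IsProbabilityMeasure μ] (ε : Ω → ℝ)
    (σ τs z n : ℝ) (hτ : 0 < τs) (hzn : z ^ 2 < n)
    (horacle : ∫ ω, τs / Real.sqrt (τs ^ 2 + σ ^ 2 * (ε ω) ^ 2) ∂μ = 1 - z ^ 2 / n) :
    τs ^ 2 ≥ n * (∫ ω, if σ ^ 2 * (ε ω) ^ 2 ≤ τs ^ 2 then σ ^ 2 * (ε ω) ^ 2 else 0 ∂μ)
        / (4 * z ^ 2) := by
  have hn : 0 < n := (sq_nonneg z).trans_lt hzn
  set ratio := fun ω => τs / Real.sqrt (τs ^ 2 + σ ^ 2 * (ε ω) ^ 2)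
  -- a non-integrable `ratio` would have integral `0`, and `1 - z²/n ≠ 0`
  have hratio : Integrable ratio μ := by
    by_contra hnot
    rw [integral_undef hnot, eq_comm, sub_eq_zero, eq_div_iff hn.ne', one_mul] at horacle
    exact hzn.ne' horacle
  have htrunc : ∫ ω, (if σ ^ 2 * (ε ω) ^ 2 ≤ τs ^ 2 then σ ^ 2 * (ε ω) ^ 2 else 0) ∂μ
      ≤ 4 * τs ^ 2 * (z ^ 2 / n) := calc
    _ ≤ ∫ ω, 4 * τs ^ 2 * (1 - ratio ω) ∂μ := by
      refine integral_mono_of_nonneg (ae_of_all _ fun ω => ?_)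
        (((integrable_const 1).sub hratio).const_mul _)
        (ae_of_all _ fun ω => truncate_le_four_mul_sq_mul_one_sub hτ (by positivity))
      dsimp only
      split_ifs <;> positivity
    _ = 4 * τs ^ 2 * (z ^ 2 / n) := by
      rw [integral_const_mul, integral_sub (integrable_const 1) hratio, horacle]
      simp
  refine div_le_of_le_mul₀ (by positivity) (sq_nonneg τs) ?_
  calc n * _ ≤ n * (4 * τs ^ 2 * (z ^ 2 / n)) := mul_le_mul_of_nonneg_left htrunc hn.le
    _ = τs ^ 2 * (4 * z ^ 2) := by field_simp

theorem oracle_tau_lower_bound {Ω : Type*} [MeasurableSpace Ω]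
    (μ : Measure Ω) [IsProbabilityMeasure μ] (ε : Ω → ℝ) (hε : Measurable ε)
    (hint : Integrable ε μ) (hmean : ∫ ω, ε ω ∂μ = 0)
    (hint2 : Integrable (fun ω => (ε ω) ^ 2) μ) (hvar : ∫ ω, (ε ω) ^ 2 ∂μ = 1)
    (σ τs z n : ℝ) (hσ : 0 < σ) (hτ : 0 < τs) (hz : 0 < z ^ 2) (hzn : z ^ 2 < n)
    (horacle : ∫ ω, τs / Real.sqrt (τs ^ 2 + σ ^ 2 * (ε ω) ^ 2) ∂μ = 1 - z ^ 2 / n) :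
    τs ^ 2 ≥ n * (∫ ω, if σ ^ 2 * (ε ω) ^ 2 ≤ τs ^ 2 then σ ^ 2 * (ε ω) ^ 2 else 0 ∂μ)
        / (4 * z ^ 2) :=
  oracle_tau_lower_bound_general μ ε σ τs z n hτ hzn horacle
end

section
/- Let ε be a random variable with E[ε] = 0, E[ε²] = 1, and let σ, τ > 0. Then |E[τσε/√(τ² + σ²ε²)]| ≤ σ²/(2τ). -/
/-!
Since `E[σε] = 0`, the bias equals `E[ψ_τ(σε) - σε]` for the Pseudo-Huber score `ψ_τ`, and
`|ψ_τ(y) - y| ≤ y² / (2τ)` pointwise; integrating and using `E[ε²] = 1` gives `σ² / (2τ)`.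
-/

open MeasureTheory

/-- The score `ψ_τ`, i.e. the derivative of the Pseudo-Huber loss `τ² (√(1 + (y/τ)²) - 1)`. -/
noncomputable def pseudoHuberScore (τ y : ℝ) : ℝ := τ * y / √(τ ^ 2 + y ^ 2)

lemma measurable_pseudoHuberScore (τ : ℝ) : Measurable (pseudoHuberScore τ) := by
  unfold pseudoHuberScore
  fun_prop

/-- `ψ_τ(y) - y = -y³ / (s (s + τ))` with `s = √(τ² + y²)`, and `s (s + τ) ≥ s² ≥ 2τ|y|`. -/
lemma abs_pseudoHuberScore_sub_le {τ : ℝ} (hτ : 0 < τ) (y : ℝ) :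
    |pseudoHuberScore τ y - y| ≤ y ^ 2 / (2 * τ) := by
  set s := √(τ ^ 2 + y ^ 2) with hs
  have hs2 : s ^ 2 = τ ^ 2 + y ^ 2 := Real.sq_sqrt (by positivity)
  have hτs : τ ≤ s := Real.le_sqrt_of_sq_le (by nlinarith)
  have hs_pos : 0 < s := hτ.trans_le hτs
  have hsub : pseudoHuberScore τ y - y = -(y * y ^ 2) / (s * (s + τ)) := by
    unfold pseudoHuberScore
    rw [← hs]
    field_simp
    linear_combination (-y) * hs2
  have hamgm : 2 * τ * |y| ≤ s * (s + τ) := by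
    nlinarith [sq_abs y, sq_nonneg (τ - |y|)]
  rw [hsub, abs_div, abs_neg, abs_mul, abs_of_pos (by positivity : 0 < s * (s + τ)),
    abs_of_nonneg (sq_nonneg y), div_le_div_iff₀ (by positivity) (by positivity)]
  nlinarith [sq_nonneg y]

lemma abs_integral_pseudoHuberScore_le {Ω : Type*} [MeasurableSpace Ω] {μ : Measure Ω}
    {Y : Ω → ℝ} (hY : Integrable Y μ) (hmean : ∫ ω, Y ω ∂μ = 0)
    (hY2 : Integrable (fun ω => Y ω ^ 2) μ) {τ : ℝ} (hτ : 0 < τ) :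
    |∫ ω, pseudoHuberScore τ (Y ω) ∂μ| ≤ (∫ ω, Y ω ^ 2 ∂μ) / (2 * τ) := by
  have hbound : Integrable (fun ω => Y ω ^ 2 / (2 * τ)) μ := hY2.div_const _
  have hdev : ∀ᵐ ω ∂μ, ‖pseudoHuberScore τ (Y ω) - Y ω‖ ≤ Y ω ^ 2 / (2 * τ) :=
    ae_of_all _ fun ω => abs_pseudoHuberScore_sub_le hτ (Y ω)
  have hdiff : Integrable (fun ω => pseudoHuberScore τ (Y ω) - Y ω) μ :=
    hbound.mono' (((measurable_pseudoHuberScore τ).comp_aemeasurable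
      hY.aemeasurable).aestronglyMeasurable.sub hY.aestronglyMeasurable) hdev
  have hscore : Integrable (fun ω => pseudoHuberScore τ (Y ω)) μ :=
    (hdiff.add hY).congr (ae_of_all _ fun ω => sub_add_cancel _ (Y ω))
  have hcentered : ∫ ω, pseudoHuberScore τ (Y ω) ∂μ =
      ∫ ω, (pseudoHuberScore τ (Y ω) - Y ω) ∂μ := by
    rw [integral_sub hscore hY, hmean, sub_zero]
  rw [hcentered, ← integral_div]
  exact norm_integral_le_of_norm_le hbound hdev

theorem score_bias_bound_general {Ω : Type*} [MeasurableSpace Ω]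
    (μ : Measure Ω) (ε : Ω → ℝ)
    (hint : Integrable ε μ) (hmean : ∫ ω, ε ω ∂μ = 0)
    (hint2 : Integrable (fun ω => (ε ω) ^ 2) μ) (hvar : ∫ ω, (ε ω) ^ 2 ∂μ = 1)
    (σ τ : ℝ) (hτ : 0 < τ) :
    |∫ ω, τ * σ * ε ω / Real.sqrt (τ ^ 2 + σ ^ 2 * (ε ω) ^ 2) ∂μ| ≤
      σ ^ 2 / (2 * τ) := by
  have hscore : ∀ ω, τ * σ * ε ω / Real.sqrt (τ ^ 2 + σ ^ 2 * (ε ω) ^ 2) =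
      pseudoHuberScore τ (σ * ε ω) := fun ω => by
    rw [pseudoHuberScore, mul_pow, mul_assoc]
  have hsq : (fun ω => (σ * ε ω) ^ 2) = fun ω => σ ^ 2 * ε ω ^ 2 := by
    simp only [mul_pow]
  have hbias := abs_integral_pseudoHuberScore_le (hint.const_mul σ)
    (by rw [integral_const_mul, hmean, mul_zero]) (by rw [hsq]; exact hint2.const_mul _) hτ
  simpa only [hscore, hsq, integral_const_mul, hvar, mul_one] using hbias

theorem score_bias_bound {Ω : Type*} [MeasurableSpace Ω]
    (μ : Measure Ω) [IsProbabilityMeasure μ] (ε : Ω → ℝ) (hε : Measurable ε)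
    (hint : Integrable ε μ) (hmean : ∫ ω, ε ω ∂μ = 0)
    (hint2 : Integrable (fun ω => (ε ω) ^ 2) μ) (hvar : ∫ ω, (ε ω) ^ 2 ∂μ = 1)
    (σ τ : ℝ) (hσ : 0 < σ) (hτ : 0 < τ) :
    |∫ ω, τ * σ * ε ω / Real.sqrt (τ ^ 2 + σ ^ 2 * (ε ω) ^ 2) ∂μ| ≤
      σ ^ 2 / (2 * τ) :=
  score_bias_bound_general μ ε hint hmean hint2 hvar σ τ hτ
end

section
/- For all real x, w > 0, and τ > 0, |x/√(w² + x²) − x/√(τ² + x²)| ≤ |w − τ| / (2·min(w, τ)). -/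
/-!
Since `√(t² + x²) = ‖t + x i‖`, the map `t ↦ √(t² + x²)` is 1-Lipschitz, so
`|x/a - x/b| = |x| |b - a| / (a b) ≤ |x| |w - τ| / (a b)` for `a = √(w² + x²)`, `b = √(τ² + x²)`.
Both `a` and `b` are at least `√(m² + x²)` with `m = min w τ`, and `m² + x² ≥ 2 m |x|` by AM-GM,
whence `|x| / (a b) ≤ 1 / (2 m)`.
-/

open Real

lemma abs_sqrt_sq_add_sq_sub_sqrt_sq_add_sq_le (x s t : ℝ) :
    |√(s ^ 2 + x ^ 2) - √(t ^ 2 + x ^ 2)| ≤ |s - t| := by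
  have hnorm (u : ℝ) : ‖(⟨u, x⟩ : ℂ)‖ = √(u ^ 2 + x ^ 2) := by
    rw [Complex.norm_def, Complex.normSq_mk]; ring_nf
  have hsub : (⟨s, x⟩ : ℂ) - ⟨t, x⟩ = ((s - t : ℝ) : ℂ) := by
    apply Complex.ext <;> simp
  simpa only [hnorm, hsub, Complex.norm_real, Real.norm_eq_abs] using
    abs_norm_sub_norm_le (⟨s, x⟩ : ℂ) ⟨t, x⟩

lemma abs_div_sqrt_sq_add_sq_mul_sqrt_sq_add_sq_le (x : ℝ) {m s t : ℝ} (hm : 0 < m)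
    (hms : m ≤ s) (hmt : m ≤ t) :
    |x| / (√(s ^ 2 + x ^ 2) * √(t ^ 2 + x ^ 2)) ≤ 1 / (2 * m) := by
  have hsqrt {u : ℝ} (hmu : m ≤ u) : √(m ^ 2 + x ^ 2) ≤ √(u ^ 2 + x ^ 2) := by
    gcongr
  have hprod : m ^ 2 + x ^ 2 ≤ √(s ^ 2 + x ^ 2) * √(t ^ 2 + x ^ 2) :=
    calc m ^ 2 + x ^ 2 = √(m ^ 2 + x ^ 2) * √(m ^ 2 + x ^ 2) :=
          (mul_self_sqrt (by positivity)).symm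
      _ ≤ √(s ^ 2 + x ^ 2) * √(t ^ 2 + x ^ 2) :=
          mul_le_mul (hsqrt hms) (hsqrt hmt) (sqrt_nonneg _) (sqrt_nonneg _)
  have hpos : 0 < √(s ^ 2 + x ^ 2) * √(t ^ 2 + x ^ 2) := by
    nlinarith [sq_nonneg x]
  rw [div_le_div_iff₀ hpos (by positivity)]
  nlinarith [two_mul_le_add_sq m |x|, sq_abs x]

theorem score_lipschitz_in_tau (x w τ : ℝ) (hw : 0 < w) (hτ : 0 < τ) :
    |x / Real.sqrt (w ^ 2 + x ^ 2) - x / Real.sqrt (τ ^ 2 + x ^ 2)| ≤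
      |w - τ| / (2 * min w τ) := by
  have ha : 0 < √(w ^ 2 + x ^ 2) := by positivity
  have hb : 0 < √(τ ^ 2 + x ^ 2) := by positivity
  calc |x / √(w ^ 2 + x ^ 2) - x / √(τ ^ 2 + x ^ 2)|
      = |x| * |√(τ ^ 2 + x ^ 2) - √(w ^ 2 + x ^ 2)| / (√(w ^ 2 + x ^ 2) * √(τ ^ 2 + x ^ 2)) := by
        rw [div_sub_div _ _ ha.ne' hb.ne', abs_div, abs_of_pos (mul_pos ha hb), ← abs_mul]
        ring_nf
    _ ≤ |x| * |w - τ| / (√(w ^ 2 + x ^ 2) * √(τ ^ 2 + x ^ 2)) := by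
        rw [abs_sub_comm w τ]
        gcongr |x| * ?_ / _
        exact abs_sqrt_sq_add_sq_sub_sqrt_sq_add_sq_le x τ w
    _ = |w - τ| * (|x| / (√(w ^ 2 + x ^ 2) * √(τ ^ 2 + x ^ 2))) := by ring
    _ ≤ |w - τ| * (1 / (2 * min w τ)) := by
        gcongr |w - τ| * ?_
        exact abs_div_sqrt_sq_add_sq_mul_sqrt_sq_add_sq_le x (lt_min hw hτ)
          (min_le_left w τ) (min_le_right w τ)
    _ = |w - τ| / (2 * min w τ) := by ring
end

section
/- Let Z₁, …, Z_n be independent real random variables with Σᵢ E[Zᵢ²] ≤ v and Σᵢ E[|Zᵢ|^k] ≤ (k!/2)·v·c^{k−2} for all integers k ≥ 3. Then for S_n = Σᵢ (Zᵢ − E[Zᵢ]) and every t ≥ 0, P(|S_n| ≥ √(2vt) + c·t) ≤ 2e^{−t}. -/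
open MeasureTheory ProbabilityTheory Real
open scoped Nat

/-!
Bernstein's moment condition bounds `∑ᵢ 𝔼[exp |t Zᵢ| - 1 - |t Zᵢ|] = ∑ᵢ ∑_{k ≥ 2} |t|ᵏ 𝔼|Zᵢ|ᵏ / k!`
by the geometric series `v t² / (2 (1 - |t| c))`. Since `exp x ≤ 1 + x + (exp |x| - 1 - |x|)`
and `1 + y ≤ exp y`, the moment generating function of each centred `Zᵢ` is at most the exponential
of its term, so by independence the centred sum `S` is sub-gamma with variance factor `v` and
scale `c`. Chernoff's bound then controls each of the tails of `S` and `-S` by `e^{-t}`.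
-/

theorem Real.exp_sub_one_sub_le_exp_abs (x : ℝ) : exp x - 1 - x ≤ exp |x| - 1 - |x| := by
  rcases le_or_gt 0 x with hx | hx
  · rw [abs_of_nonneg hx]
  · have h := sinh_lt_self_iff.mpr hx
    rw [sinh_eq] at h
    rw [abs_of_neg hx]
    linarith

theorem Real.hasSum_exp_sub_one_sub (x : ℝ) :
    HasSum (fun k : ℕ => x ^ (k + 2) / (k + 2)!) (exp x - 1 - x) := by
  have h := NormedSpace.expSeries_div_hasSum_exp x
  rw [← exp_eq_exp_ℝ, ← hasSum_nat_add_iff' 2] at h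
  simpa [Finset.sum_range_succ, sub_sub] using h

theorem exists_subGamma_chernoff_parameter {v c t : ℝ} (hv : 0 < v) (hc : 0 ≤ c) (ht : 0 ≤ t) :
    ∃ l, 0 ≤ l ∧ l * c < 1 ∧
      -l * (√(2 * v * t) + c * t) + v * l ^ 2 / (2 * (1 - l * c)) = -t := by
  -- `l = s / (1 + c s)` with `s = √(2t/v)` optimizes the Chernoff bound
  set s := √(2 * t / v)
  have hs : 0 ≤ s := sqrt_nonneg _
  have hvs : v * s ^ 2 = 2 * t := by
    rw [sq_sqrt (by positivity)]; field_simp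
  have hsqrt : √(2 * v * t) = v * s := by
    rw [show 2 * v * t = v ^ 2 * (2 * t / v) by field_simp, sqrt_mul (sq_nonneg v),
      sqrt_sq hv.le]
  have hD : 0 < 1 + c * s := by positivity
  have h1 : 1 - s / (1 + c * s) * c = 1 / (1 + c * s) := by field_simp; ring
  refine ⟨s / (1 + c * s), by positivity, by linarith [h1, one_div_pos.mpr hD], ?_⟩
  rw [h1, hsqrt]
  field_simp
  linear_combination -hvs

theorem summable_and_sum_tsum_le_of_sum_le {ι : Type*} [Fintype ι] {f : ι → ℕ → ℝ}
    {g : ℕ → ℝ} (hf : ∀ i k, 0 ≤ f i k) (hfg : ∀ k, ∑ i, f i k ≤ g k) (hg : Summable g) :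
    (∀ i, Summable (f i)) ∧ ∑ i, ∑' k, f i k ≤ ∑' k, g k := by
  have hsum : ∀ i, Summable (f i) := fun i =>
    hg.of_nonneg_of_le (hf i) fun k =>
      (Finset.single_le_sum (fun j _ => hf j k) (Finset.mem_univ i)).trans (hfg k)
  refine ⟨hsum, ?_⟩
  rw [← Summable.tsum_finsetSum fun i _ => hsum i]
  exact (summable_sum fun i _ => hsum i).tsum_le_tsum hfg hg

namespace MeasureTheory

variable {Ω : Type*} [MeasurableSpace Ω] {μ : Measure Ω}

theorem Integrable.of_hasSum_of_nonneg {ι : Type*} [Countable ι] {f : Ω → ℝ} {F : ι → Ω → ℝ}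
    (hf : AEStronglyMeasurable f μ) (hF_nonneg : ∀ i ω, 0 ≤ F i ω)
    (hF_int : ∀ i, Integrable (F i) μ) (hfF : ∀ ω, HasSum (F · ω) (f ω))
    (hF_sum : Summable fun i => ∫ ω, F i ω ∂μ) : Integrable f μ := by
  refine ⟨hf, (hasFiniteIntegral_iff_ofReal <| .of_forall fun ω =>
    (hfF ω).nonneg (hF_nonneg · ω)).mpr ?_⟩
  calc ∫⁻ ω, ENNReal.ofReal (f ω) ∂μ
      = ∫⁻ ω, ∑' i, ENNReal.ofReal (F i ω) ∂μ := by
        refine lintegral_congr fun ω => ?_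
        rw [← (hfF ω).tsum_eq, ENNReal.ofReal_tsum_of_nonneg (hF_nonneg · ω) (hfF ω).summable]
    _ = ∑' i, ENNReal.ofReal (∫ ω, F i ω ∂μ) := by
        rw [lintegral_tsum fun i => (hF_int i).aemeasurable.ennreal_ofReal]
        refine tsum_congr fun i => ?_
        rw [ofReal_integral_eq_lintegral_ofReal (hF_int i) (.of_forall (hF_nonneg i))]
    _ = ENNReal.ofReal (∑' i, ∫ ω, F i ω ∂μ) :=
        (ENNReal.ofReal_tsum_of_nonneg (fun i => integral_nonneg (hF_nonneg i)) hF_sum).symm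
    _ < ⊤ := ENNReal.ofReal_lt_top

theorem hasSum_integral_of_hasSum_of_nonneg {ι : Type*} [Countable ι] {f : Ω → ℝ}
    {F : ι → Ω → ℝ} (hF_nonneg : ∀ i ω, 0 ≤ F i ω)
    (hF_int : ∀ i, Integrable (F i) μ) (hfF : ∀ ω, HasSum (F · ω) (f ω))
    (hF_sum : Summable fun i => ∫ ω, F i ω ∂μ) :
    HasSum (fun i => ∫ ω, F i ω ∂μ) (∫ ω, f ω ∂μ) := by
  have h := hasSum_integral_of_summable_integral_norm hF_int (by
    simpa only [Real.norm_of_nonneg (hF_nonneg _ _)] using hF_sum)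
  simpa only [(hfF _).tsum_eq] using h

theorem integrable_exp_sub_one_sub_and_hasSum {Y : Ω → ℝ} (hY : AEStronglyMeasurable Y μ)
    (hY_nonneg : ∀ ω, 0 ≤ Y ω) (hmom : ∀ k, Integrable (fun ω => Y ω ^ k) μ)
    (hsum : Summable fun k : ℕ => ∫ ω, Y ω ^ (k + 2) / (k + 2)! ∂μ) :
    Integrable (fun ω => exp (Y ω) - 1 - Y ω) μ ∧
      HasSum (fun k : ℕ => ∫ ω, Y ω ^ (k + 2) / (k + 2)! ∂μ)
        (∫ ω, exp (Y ω) - 1 - Y ω ∂μ) := by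
  have hF_nonneg : ∀ (k : ℕ) ω, 0 ≤ Y ω ^ (k + 2) / (k + 2)! := fun k ω => by
    have := hY_nonneg ω; positivity
  have hF_int : ∀ k : ℕ, Integrable (fun ω => Y ω ^ (k + 2) / (k + 2)!) μ := fun k =>
    (hmom (k + 2)).div_const _
  have hfF : ∀ ω, HasSum (fun k : ℕ => Y ω ^ (k + 2) / (k + 2)!) (exp (Y ω) - 1 - Y ω) :=
    fun ω => hasSum_exp_sub_one_sub (Y ω)
  exact ⟨.of_hasSum_of_nonneg (by fun_prop) hF_nonneg hF_int hfF hsum,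
    hasSum_integral_of_hasSum_of_nonneg hF_nonneg hF_int hfF hsum⟩

theorem measure_le_abs_le_add (f : Ω → ℝ) (ε : ℝ) :
    μ {ω | ε ≤ |f ω|} ≤ μ {ω | ε ≤ f ω} + μ {ω | ε ≤ -f ω} :=
  calc μ {ω | ε ≤ |f ω|} ≤ μ ({ω | ε ≤ f ω} ∪ {ω | ε ≤ -f ω}) :=
        measure_mono fun _ (hω : ε ≤ _) => (le_abs.mp hω : _ ∨ _)
    _ ≤ _ := measure_union_le _ _

end MeasureTheory

namespace ProbabilityTheory

variable {Ω : Type*} [MeasurableSpace Ω] {μ : Measure Ω}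

theorem mgf_sub_integral_le [IsProbabilityMeasure μ] {X : Ω → ℝ} {t : ℝ}
    (hX : Integrable X μ) (hR : Integrable (fun ω => exp |t * X ω| - 1 - |t * X ω|) μ) :
    Integrable (fun ω => exp (t * (X ω - μ[X]))) μ ∧
      mgf (fun ω => X ω - μ[X]) μ t ≤ exp (∫ ω, exp |t * X ω| - 1 - |t * X ω| ∂μ) := by
  set R := ∫ ω, exp |t * X ω| - 1 - |t * X ω| ∂μ
  have hlin : Integrable (fun ω => 1 + t * X ω) μ := (integrable_const 1).add (hX.const_mul t)
  have hB : Integrable (fun ω => 1 + t * X ω + (exp |t * X ω| - 1 - |t * X ω|)) μ :=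
    hlin.add hR
  have hle : ∀ ω, exp (t * X ω) ≤ 1 + t * X ω + (exp |t * X ω| - 1 - |t * X ω|) := fun ω => by
    linarith [exp_sub_one_sub_le_exp_abs (t * X ω)]
  have hexp : Integrable (fun ω => exp (t * X ω)) μ :=
    hB.mono' (by fun_prop) (.of_forall fun ω => by
      rw [norm_of_nonneg (exp_pos _).le]; exact hle ω)
  have hmgf : mgf X μ t ≤ exp (t * μ[X] + R) :=
    calc mgf X μ t ≤ ∫ ω, 1 + t * X ω + (exp |t * X ω| - 1 - |t * X ω|) ∂μ :=
          integral_mono hexp hB hle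
      _ = 1 + t * μ[X] + R := by
          rw [integral_add hlin hR, integral_add (integrable_const 1) (hX.const_mul t),
            integral_const_mul, integral_const, probReal_univ, one_smul]
      _ ≤ exp (t * μ[X] + R) := by linarith [add_one_le_exp (t * μ[X] + R)]
  have hshift : ∀ ω, exp (t * (X ω - μ[X])) = exp (t * X ω) * exp (t * -μ[X]) := fun ω => by
    rw [← exp_add]; ring_nf
  refine ⟨(hexp.mul_const _).congr (.of_forall fun ω => (hshift ω).symm), ?_⟩
  calc mgf (fun ω => X ω - μ[X]) μ t = mgf X μ t * exp (t * -μ[X]) := by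
        simp_rw [sub_eq_add_neg, mgf_add_const]
    _ ≤ exp (t * μ[X] + R) * exp (t * -μ[X]) := by gcongr
    _ = exp R := by rw [← exp_add]; ring_nf

theorem sum_integral_abs_pow_le_of_bernstein {ι : Type*} [Fintype ι] {Z : ι → Ω → ℝ} {v c : ℝ}
    (hv2 : ∑ i, ∫ ω, (Z i ω) ^ 2 ∂μ ≤ v)
    (hmom : ∀ k : ℕ, 3 ≤ k → ∑ i, ∫ ω, |Z i ω| ^ k ∂μ ≤ k ! / 2 * v * c ^ (k - 2))
    (k : ℕ) (hk : 2 ≤ k) : ∑ i, ∫ ω, |Z i ω| ^ k ∂μ ≤ k ! / 2 * v * c ^ (k - 2) := by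
  obtain rfl | hk := hk.eq_or_lt
  · simpa using hv2
  · exact hmom k hk

theorem sum_integral_exp_abs_mul_sub_one_sub_le {ι : Type*} [Fintype ι] {Z : ι → Ω → ℝ}
    {v c t : ℝ} (hmeas : ∀ i, AEStronglyMeasurable (Z i) μ)
    (hint : ∀ i k, Integrable (fun ω => |Z i ω| ^ k) μ) (hc : 0 ≤ c)
    (hmom : ∀ k, 2 ≤ k → ∑ i, ∫ ω, |Z i ω| ^ k ∂μ ≤ k ! / 2 * v * c ^ (k - 2))
    (htc : |t| * c < 1) :
    (∀ i, Integrable (fun ω => exp |t * Z i ω| - 1 - |t * Z i ω|) μ) ∧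
      ∑ i, ∫ ω, exp |t * Z i ω| - 1 - |t * Z i ω| ∂μ ≤ v * t ^ 2 / (2 * (1 - |t| * c)) := by
  have hpow : ∀ i k, (fun ω => |t * Z i ω| ^ k) = fun ω => |t| ^ k * |Z i ω| ^ k := fun i k => by
    simp_rw [abs_mul, mul_pow]
  set F : ι → ℕ → ℝ := fun i k => ∫ ω, |t * Z i ω| ^ (k + 2) / (k + 2)! ∂μ
  have hF : ∀ i k, F i k = |t| ^ (k + 2) / (k + 2)! * ∫ ω, |Z i ω| ^ (k + 2) ∂μ := fun i k => by
    rw [← integral_const_mul]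
    exact integral_congr_ae (.of_forall fun ω => by simp only [abs_mul, mul_pow]; ring)
  have hF_nonneg : ∀ i k, 0 ≤ F i k := fun i k =>
    integral_nonneg fun ω => by positivity
  have hF_le : ∀ k, ∑ i, F i k ≤ v * t ^ 2 / 2 * (|t| * c) ^ k := fun k =>
    calc ∑ i, F i k = |t| ^ (k + 2) / (k + 2)! * ∑ i, ∫ ω, |Z i ω| ^ (k + 2) ∂μ := by
          simp only [hF, Finset.mul_sum]
      _ ≤ |t| ^ (k + 2) / (k + 2)! * ((k + 2)! / 2 * v * c ^ k) := by
          gcongr; exact hmom (k + 2) le_add_self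
      _ = v * t ^ 2 / 2 * (|t| * c) ^ k := by
          field_simp; rw [← sq_abs t]; ring
  have hgeom : Summable fun k => v * t ^ 2 / 2 * (|t| * c) ^ k :=
    (summable_geometric_of_lt_one (by positivity) htc).mul_left _
  obtain ⟨hF_sum, hF_tsum⟩ := summable_and_sum_tsum_le_of_sum_le hF_nonneg hF_le hgeom
  have hR : ∀ i, _ := fun i => integrable_exp_sub_one_sub_and_hasSum (Y := fun ω => |t * Z i ω|)
    (by fun_prop) (fun ω => abs_nonneg _)
    (fun k => by rw [hpow]; exact (hint i k).const_mul _) (hF_sum i)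
  refine ⟨fun i => (hR i).1, ?_⟩
  calc ∑ i, ∫ ω, exp |t * Z i ω| - 1 - |t * Z i ω| ∂μ = ∑ i, ∑' k, F i k :=
        Finset.sum_congr rfl fun i _ => (hR i).2.tsum_eq.symm
    _ ≤ ∑' k, v * t ^ 2 / 2 * (|t| * c) ^ k := hF_tsum
    _ = v * t ^ 2 / (2 * (1 - |t| * c)) := by
        rw [tsum_mul_left, tsum_geometric_of_lt_one (by positivity) htc]
        field_simp

/-- The (two-sided) sub-gamma condition of Boucheron, Lugosi and Massart. -/
def HasSubGammaMGF (X : Ω → ℝ) (v c : ℝ) (μ : Measure Ω) : Prop :=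
  ∀ t, |t| * c < 1 → Integrable (fun ω => exp (t * X ω)) μ ∧
    mgf X μ t ≤ exp (v * t ^ 2 / (2 * (1 - |t| * c)))

theorem HasSubGammaMGF.neg {X : Ω → ℝ} {v c : ℝ} (h : HasSubGammaMGF X v c μ) :
    HasSubGammaMGF (-X) v c μ := fun t htc => by
  obtain ⟨hint, hmgf⟩ := h (-t) (by rwa [abs_neg])
  refine ⟨hint.congr (.of_forall fun ω => by simp), ?_⟩
  rwa [mgf_neg, ← abs_neg t, ← neg_sq t]

theorem HasSubGammaMGF.measure_ge_le [IsFiniteMeasure μ] {X : Ω → ℝ} {v c t : ℝ}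
    (h : HasSubGammaMGF X v c μ) (hv : 0 < v) (hc : 0 ≤ c) (ht : 0 ≤ t) :
    μ {ω | √(2 * v * t) + c * t ≤ X ω} ≤ ENNReal.ofReal (exp (-t)) := by
  obtain ⟨l, hl, hlc, hexponent⟩ := exists_subGamma_chernoff_parameter hv hc ht
  obtain ⟨hint, hmgf⟩ := h l (by rwa [abs_of_nonneg hl])
  rw [abs_of_nonneg hl] at hmgf
  rw [ENNReal.le_ofReal_iff_toReal_le (measure_ne_top _ _) (exp_pos _).le]
  calc μ.real {ω | √(2 * v * t) + c * t ≤ X ω}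
      ≤ exp (-l * (√(2 * v * t) + c * t)) * mgf X μ l := measure_ge_le_exp_mul_mgf _ hl hint
    _ ≤ exp (-l * (√(2 * v * t) + c * t)) * exp (v * l ^ 2 / (2 * (1 - l * c))) := by gcongr
    _ = exp (-t) := by rw [← exp_add, hexponent]

theorem hasSubGammaMGF_sum_sub_integral [IsProbabilityMeasure μ] {ι : Type*} [Fintype ι]
    {Z : ι → Ω → ℝ} {v c : ℝ} (hmeas : ∀ i, Measurable (Z i)) (hindep : iIndepFun Z μ)
    (hint : ∀ i k, Integrable (fun ω => |Z i ω| ^ k) μ) (hc : 0 ≤ c)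
    (hmom : ∀ k, 2 ≤ k → ∑ i, ∫ ω, |Z i ω| ^ k ∂μ ≤ k ! / 2 * v * c ^ (k - 2)) :
    HasSubGammaMGF (fun ω => ∑ i, (Z i ω - ∫ ω', Z i ω' ∂μ)) v c μ := by
  intro t htc
  set Y : ι → Ω → ℝ := fun i ω => Z i ω - ∫ ω', Z i ω' ∂μ
  have hY_meas : ∀ i, Measurable (Y i) := fun i => (hmeas i).sub_const _
  have hY_indep : iIndepFun Y μ := hindep.comp _ fun i => measurable_id.sub_const _
  have hY_sum : (fun ω => ∑ i, Y i ω) = ∑ i, Y i := by ext; simp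
  obtain ⟨hR, hR_sum⟩ := sum_integral_exp_abs_mul_sub_one_sub_le
    (fun i => (hmeas i).aestronglyMeasurable) hint hc hmom htc
  have hY_mgf : ∀ i, _ := fun i => mgf_sub_integral_le (μ := μ) (X := Z i)
    ((integrable_norm_iff (hmeas i).aestronglyMeasurable).mp (by simpa using hint i 1)) (hR i)
  rw [hY_sum]
  refine ⟨hY_indep.integrable_exp_mul_sum hY_meas fun i _ => (hY_mgf i).1, ?_⟩
  calc mgf (∑ i, Y i) μ t = ∏ i, mgf (Y i) μ t := hY_indep.mgf_sum hY_meas _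
    _ ≤ ∏ i, exp (∫ ω, exp |t * Z i ω| - 1 - |t * Z i ω| ∂μ) :=
        Finset.prod_le_prod (fun i _ => mgf_nonneg) fun i _ => (hY_mgf i).2
    _ = exp (∑ i, ∫ ω, exp |t * Z i ω| - 1 - |t * Z i ω| ∂μ) := (exp_sum _ _).symm
    _ ≤ exp (v * t ^ 2 / (2 * (1 - |t| * c))) := exp_le_exp.mpr hR_sum

end ProbabilityTheory

theorem bernstein_two_sided {Ω : Type*} [MeasurableSpace Ω]
    (μ : Measure Ω) [IsProbabilityMeasure μ] (n : ℕ) (Z : Fin n → Ω → ℝ)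
    (hmeas : ∀ i, Measurable (Z i))
    (hindep : iIndepFun Z μ)
    (hint : ∀ i k, Integrable (fun ω => |Z i ω| ^ k) μ)
    (v c : ℝ) (hv : 0 < v) (hc : 0 < c)
    (hv2 : ∑ i, ∫ ω, (Z i ω) ^ 2 ∂μ ≤ v)
    (hmom : ∀ k : ℕ, 3 ≤ k →
      ∑ i, ∫ ω, |Z i ω| ^ k ∂μ ≤ (Nat.factorial k : ℝ) / 2 * v * c ^ (k - 2))
    (t : ℝ) (ht : 0 ≤ t) :
    μ {ω | Real.sqrt (2 * v * t) + c * t ≤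
        |∑ i, (Z i ω - ∫ ω', Z i ω' ∂μ)|} ≤
      ENNReal.ofReal (2 * Real.exp (-t)) := by
  have hS := hasSubGammaMGF_sum_sub_integral hmeas hindep hint hc.le
    (sum_integral_abs_pow_le_of_bernstein hv2 hmom)
  calc _ ≤ _ := measure_le_abs_le_add _ _
    _ ≤ ENNReal.ofReal (exp (-t)) + ENNReal.ofReal (exp (-t)) :=
        add_le_add (hS.measure_ge_le hv hc.le ht) (hS.neg.measure_ge_le hv hc.le ht)
    _ = ENNReal.ofReal (2 * exp (-t)) := by
        rw [← ENNReal.ofReal_add (exp_pos _).le (exp_pos _).le, two_mul]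
end
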